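/- For every natural number n > 2, the automorphism group of the dihedral group D_n of order 2n is isomorphic to the semidirect product (ℤ/n) ⋊ (ℤ/n)ˣ, where the unit group (ℤ/n)ˣ acts on ℤ/n by multiplication. -/

import Mathlib

open DihedralGroup

variable {n : ℕ}

def myphi (n : ℕ) : (ZMod n)ˣ →* MulAut (Multiplicative (ZMod n)) where
  toFun u :=
    { toFun := fun x => Multiplicative.ofAdd ((u : ZMod n) * x.toAdd)
      invFun := fun x => Multiplicative.ofAdd (((u⁻¹ : (ZMod n)ˣ) : ZMod n) * x.toAdd)
      left_inv := fun x => by simp [← mul_assoc]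
      right_inv := fun x => by simp [← mul_assoc]
      map_mul' := fun x y => by
        simp [← ofAdd_add, mul_add] }
  map_one' := by ext x; simp
  map_mul' u v := by ext x; simp [mul_assoc]

def dAut (n : ℕ) (b : ZMod n) (u : (ZMod n)ˣ) : MulAut (DihedralGroup n) where
  toFun g := match g with
    | .r i => .r (u * i)
    | .sr i => .sr (u * i + b)
  invFun g := match g with
    | .r i => .r ((u⁻¹ : (ZMod n)ˣ) * i)
    | .sr i => .sr ((u⁻¹ : (ZMod n)ˣ) * (i - b))
  left_inv g := by
    cases g with
    | r i => simp [← mul_assoc]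
    | sr i => simp [← mul_assoc]
  right_inv g := by
    cases g with
    | r i => simp [← mul_assoc]
    | sr i => simp [mul_sub, ← mul_assoc]
  map_mul' g h := by
    cases g with
    | r i => cases h with
      | r j => simp [r_mul_r, mul_add]
      | sr j => simp [r_mul_sr, mul_sub]; ring
    | sr i => cases h with
      | r j => simp [sr_mul_r, mul_add]; ring
      | sr j => simp [sr_mul_sr, mul_sub]

lemma r_pow (a : ZMod n) (k : ℕ) : (r a : DihedralGroup n) ^ k = r ((k : ZMod n) * a) := by
  induction k with
  | zero => simp [one_def, -r_zero]
  | succ k ih => rw [pow_succ, ih, r_mul_r]; push_cast; ring_nf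

def bigPhi (n : ℕ) : Multiplicative (ZMod n) ⋊[myphi n] (ZMod n)ˣ →* MulAut (DihedralGroup n) where
  toFun p := dAut n p.left.toAdd p.right
  map_one' := by
    ext g
    cases g with
    | r i => simp [dAut]
    | sr i => simp [dAut]
  map_mul' p q := by
    ext g
    cases g with
    | r i => simp [dAut, mul_assoc]
    | sr i =>
      simp [dAut, myphi, mul_add, mul_assoc, SemidirectProduct.mul_left, SemidirectProduct.mul_right]
      erw [SemidirectProduct.mul_right, SemidirectProduct.mul_left]
      simp [myphi, mul_add, mul_assoc]
      abel

theorem aut_dihedralGroup_iso_semidirect (n : ℕ) (hn : 2 < n) :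
    ∃ φ : (ZMod n)ˣ →* MulAut (Multiplicative (ZMod n)),
      (∀ (u : (ZMod n)ˣ) (x : ZMod n),
          φ u (Multiplicative.ofAdd x) = Multiplicative.ofAdd ((u : ZMod n) * x)) ∧
      Nonempty (MulAut (DihedralGroup n) ≃* Multiplicative (ZMod n) ⋊[φ] (ZMod n)ˣ) := by
  refine ⟨myphi n, fun u x => rfl, ?_⟩
  have : NeZero n := ⟨by omega⟩
  have hbij : Function.Bijective (bigPhi n) := by
    constructor
    · intro p q h
      have h1 : (bigPhi n p) (r 1 : DihedralGroup n) = (bigPhi n q) (r 1) := by rw [h]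
      have h2 : (bigPhi n p) (sr 0 : DihedralGroup n) = (bigPhi n q) (sr 0) := by rw [h]
      simp [bigPhi, dAut] at h1 h2
      ext
      · exact h2
      · exact_mod_cast h1
    · intro e
      -- e (r 1) is a rotation
      obtain ⟨a, ha⟩ : ∃ a, e (r 1) = r a := by
        cases he : e (r 1 : DihedralGroup n) with
        | r a => exact ⟨a, rfl⟩
        | sr a =>
          exfalso
          have : orderOf (e (r 1 : DihedralGroup n)) = n := by
            rw [MulEquiv.orderOf_eq]; exact orderOf_r_one
          rw [he, orderOf_sr] at this; omega
      have her : ∀ i : ZMod n, e (r i) = r (a * i) := by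
        intro i
        have : (r i : DihedralGroup n) = (r 1) ^ i.val := by
          rw [r_one_pow, ZMod.natCast_val, ZMod.cast_id]
        rw [this, map_pow, ha, _root_.r_pow]
        congr 1
        rw [mul_comm, ZMod.natCast_val, ZMod.cast_id]
      obtain ⟨b, hb⟩ : ∃ b, e (sr 0) = sr b := by
        cases he : e (sr 0 : DihedralGroup n) with
        | sr b => exact ⟨b, rfl⟩
        | r b =>
          exfalso
          obtain ⟨g, hg⟩ := e.surjective (sr 0)
          cases g with
          | r j => rw [her] at hg; cases hg
          | sr j =>
            have : (sr j : DihedralGroup n) = sr 0 * r j := by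
              rw [sr_mul_r, zero_add]
            rw [this, map_mul, he, her, r_mul_r] at hg
            cases hg
      have hes : ∀ i : ZMod n, e (sr i) = sr (b + a * i) := by
        intro i
        have : (sr i : DihedralGroup n) = sr 0 * r i := by rw [sr_mul_r, zero_add]
        rw [this, map_mul, hb, her, sr_mul_r]
      -- a is a unit
      obtain ⟨g, hg⟩ := e.surjective (r 1)
      have hu : ∃ j, a * j = 1 := by
        cases g with
        | r j =>
          rw [her] at hg
          exact ⟨j, by injection hg⟩
        | sr j => rw [hes] at hg; exact absurd hg (by simp)
      obtain ⟨j, hj⟩ := hu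
      have hau : IsUnit a := IsUnit.of_mul_eq_one j hj
      refine ⟨⟨Multiplicative.ofAdd b, hau.unit⟩, ?_⟩
      ext g
      cases g with
      | r i => simp [bigPhi, dAut, her, hau.unit_spec]
      | sr i => simp [bigPhi, dAut, hes, hau.unit_spec, add_comm]
  exact ⟨(MulEquiv.ofBijective (bigPhi n) hbij).symm⟩
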